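/- Let n ≥ 1, let a_1,…,a_n > 0 be reals with A = Σ_{i=1}^n a_i, let p = (p_0,…,p_{n+1}) be a probability vector on {-1,1}^{n+2}, and define the linear threshold functions f(x) = sign(Σ_{i=1}^n a_i x_i − (A/2)x_{n+1} − (A/2)x_{n+2}) and g(x) = sign(Σ_{i=1}^n a_i x_i + (A/2)x_{n+1} + (A/2)x_{n+2}) on {-1,1}^{n+2}. Then for every i ∈ {1,…,n}: \tilde g^p(i) = \tilde f^p(i) − 2(p_{n+1} − p_{n−1}). -/

import Mathlib

open Finset

noncomputable section

/-- `sgn z` is `1` if `z ≥ 0` and `-1` otherwise. -/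
def sgn (z : ℝ) : ℝ := if 0 ≤ z then 1 else -1

/-- The ±1 real value encoded by a Boolean coordinate (`true ↦ 1`, `false ↦ -1`). -/
def chi (b : Bool) : ℝ := if b then 1 else -1

/-- `wt x` is the number of coordinates of `x ∈ {-1,1}^n` equal to `1`. -/
def wt {n : ℕ} (x : Fin n → Bool) : ℤ :=
  ((Finset.univ.filter fun i => x i = true).card : ℤ)

/-- Inner product `w · x` of a real vector `w` with a ±1 vector `x`. -/
def dotp {n : ℕ} (w : Fin n → ℝ) (x : Fin n → Bool) : ℝ :=
  ∑ i, w i * chi (x i)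

/-- The `i`-th semivalue of `f : {-1,1}^n → {-1,1}` with respect to the
probability vector `p` (indexed by `ℤ`, with `p t = 0` out of range):
`∑_{x : x_i = -1} p_{wt x} f(x) x_i + ∑_{x : x_i = 1} p_{wt x - 1} f(x) x_i`. -/
def semivalue {n : ℕ} (p : ℤ → ℝ) (f : (Fin n → Bool) → ℝ) (i : Fin n) : ℝ :=
  ∑ x : Fin n → Bool, (if x i then p (wt x - 1) else p (wt x)) * f x * chi (x i)

/-- `μ'_p(x) = p_{wt x} + p_{wt x - 1}`. -/
def mu' {n : ℕ} (p : ℤ → ℝ) (x : Fin n → Bool) : ℝ := p (wt x) + p (wt x - 1)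

/-- The normalizing factor `Λ(p) = ∑_x μ'_p(x)`. -/
def lam (n : ℕ) (p : ℤ → ℝ) : ℝ := ∑ x : Fin n → Bool, mu' p x

/-- The probability distribution `μ_p(x) = μ'_p(x)/Λ(p)`. -/
def mu {n : ℕ} (p : ℤ → ℝ) (x : Fin n → Bool) : ℝ := mu' p x / lam n p


/-!
Pointwise, `g - f = x_{n+1} + x_{n+2}`, except at the two points where `∑ aⱼ xⱼ = A` and
`x_{n+1} = x_{n+2}`: the all-ones vector and the vector with `x_{n+1} = x_{n+2} = -1` and all other
coordinates `1`. There `f` and `g` agree, so the correction is a multiple of the indicator of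
that point. The semivalue is linear, vanishes on functions that do not depend on `xᵢ`, and on
the indicator of a point `y` with `yᵢ = 1` it is the coefficient `p_{wt y - 1}`, which is
`p_{n+1}` resp. `p_{n-1}` for the two exceptional points.
-/

lemma chi_not (b : Bool) : chi (!b) = -chi b := by cases b <;> simp [chi]

lemma wt_update {m : ℕ} (x : Fin m → Bool) (i : Fin m) (b : Bool) :
    wt (Function.update x i b) = wt x - (if x i then 1 else 0) + (if b then 1 else 0) := by
  simp only [wt, Finset.card_filter, Nat.cast_sum, Nat.cast_ite, Nat.cast_one, Nat.cast_zero]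
  rw [← Finset.add_sum_erase _ _ (Finset.mem_univ i),
    ← Finset.add_sum_erase _ _ (Finset.mem_univ i),
    Finset.sum_congr rfl fun j hj => by rw [Function.update_of_ne (Finset.ne_of_mem_erase hj)]]
  simp only [Function.update_self]
  ring

section Semivalue

variable {m : ℕ} (p : ℤ → ℝ)

def semivalueCoeff (x : Fin m → Bool) (i : Fin m) : ℝ := if x i then p (wt x - 1) else p (wt x)

lemma semivalue_eq_sum (f : (Fin m → Bool) → ℝ) (i : Fin m) :
    semivalue p f i = ∑ x, semivalueCoeff p x i * f x * chi (x i) := rfl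

lemma semivalueCoeff_update_not (x : Fin m → Bool) (i : Fin m) :
    semivalueCoeff p (Function.update x i (!x i)) i = semivalueCoeff p x i := by
  cases h : x i <;> simp [semivalueCoeff, wt_update, h]

lemma semivalue_add (f g : (Fin m → Bool) → ℝ) (i : Fin m) :
    semivalue p (f + g) i = semivalue p f i + semivalue p g i := by
  simp only [semivalue_eq_sum, Pi.add_apply, mul_add, add_mul, Finset.sum_add_distrib]

lemma semivalue_sub (f g : (Fin m → Bool) → ℝ) (i : Fin m) :
    semivalue p (f - g) i = semivalue p f i - semivalue p g i := by
  simp only [semivalue_eq_sum, Pi.sub_apply, mul_sub, sub_mul, Finset.sum_sub_distrib]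

/-- Flipping `x i` pairs off the terms of the sum. -/
lemma semivalue_eq_zero_of_update_not (f : (Fin m → Bool) → ℝ) (i : Fin m)
    (hf : ∀ x, f (Function.update x i (!x i)) = f x) : semivalue p f i = 0 := by
  have hflip : ∀ x, semivalueCoeff p (Function.update x i (!x i)) i *
      f (Function.update x i (!x i)) * chi (Function.update x i (!x i) i)
      = -(semivalueCoeff p x i * f x * chi (x i)) := fun x => by
    simp only [semivalueCoeff_update_not, hf, Function.update_self, chi_not, mul_neg]
  have h : ∑ x, semivalueCoeff p (Function.update x i (!x i)) i *
      f (Function.update x i (!x i)) * chi (Function.update x i (!x i) i) = semivalue p f i :=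
    Equiv.sum_comp
      (Function.Involutive.toPerm (fun x => Function.update x i (!x i)) fun x => by simp)
      fun x => semivalueCoeff p x i * f x * chi (x i)
  rw [Finset.sum_congr rfl fun x _ => hflip x, Finset.sum_neg_distrib, ← semivalue_eq_sum] at h
  linarith

lemma semivalue_ite_eq (y : Fin m → Bool) (c : ℝ) (i : Fin m) :
    semivalue p (fun x => if x = y then c else 0) i = semivalueCoeff p y i * c * chi (y i) := by
  simp [semivalue_eq_sum]

end Semivalue

lemma abs_sum_mul_chi_le {ι : Type*} [Fintype ι] {a : ι → ℝ} (ha : ∀ j, 0 ≤ a j)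
    (b : ι → Bool) :
    |∑ j, a j * chi (b j)| ≤ ∑ j, a j := by
  refine (Finset.abs_sum_le_sum_abs _ _).trans (Finset.sum_le_sum fun j _ => ?_)
  cases b j <;> simp [chi, abs_of_nonneg (ha j)]

lemma sum_mul_chi_eq_sum_iff {ι : Type*} [Fintype ι] {a : ι → ℝ} (ha : ∀ j, 0 < a j)
    (b : ι → Bool) :
    ∑ j, a j * chi (b j) = ∑ j, a j ↔ ∀ j, b j = true := by
  have hterm : ∀ j, 0 ≤ a j - a j * chi (b j) := fun j => by
    cases b j <;> simp [chi, (ha j).le]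
  rw [eq_comm, ← sub_eq_zero, ← Finset.sum_sub_distrib,
    Finset.sum_eq_zero_iff_of_nonneg fun j _ => hterm j]
  refine forall_congr' fun j => ?_
  cases b j <;> simp [chi, (ha j).ne']

lemma sgn_add_sub_sgn_sub {s A : ℝ} (hs : |s| ≤ A) (b c : Bool) :
    sgn (s + A / 2 * chi b + A / 2 * chi c) - sgn (s - A / 2 * chi b - A / 2 * chi c)
      = chi b + chi c - (if s = A ∧ b = true ∧ c = true then 2 else 0)
        + (if s = A ∧ b = false ∧ c = false then 2 else 0) := by
  obtain ⟨h₁, h₂⟩ := abs_le.mp hs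
  rcases h₂.lt_or_eq with hlt | rfl
  · cases b <;> cases c <;> simp [chi, sgn, hlt.ne] <;> split_ifs <;> linarith
  · cases b <;> cases c <;> simp [chi, sgn] <;> split_ifs <;> linarith

lemma funext_iff_castAdd_two {α : Type*} {n : ℕ} {x y : Fin (n + 2) → α} {u v : Fin (n + 2)}
    (hu : (u : ℕ) = n) (hv : (v : ℕ) = n + 1) :
    x = y ↔
      (∀ j : Fin n, x (Fin.castAdd 2 j) = y (Fin.castAdd 2 j)) ∧ x u = y u ∧ x v = y v := by
  refine ⟨by rintro rfl; simp, fun ⟨hlt, hxu, hxv⟩ => funext fun j => ?_⟩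
  obtain hj | hj | hj : (j : ℕ) < n ∨ (j : ℕ) = n ∨ (j : ℕ) = n + 1 := by omega
  · exact hlt ⟨j, hj⟩
  · rwa [show j = u from Fin.ext (hj.trans hu.symm)]
  · rwa [show j = v from Fin.ext (hj.trans hv.symm)]

lemma sgn_threshold_sub_sgn_threshold {n : ℕ} {a : Fin n → ℝ} (ha : ∀ j, 0 < a j)
    {u v : Fin (n + 2)} (hu : (u : ℕ) = n) (hv : (v : ℕ) = n + 1) (x : Fin (n + 2) → Bool) :
    sgn (∑ j, a j * chi (x (Fin.castAdd 2 j)) + (∑ j, a j) / 2 * chi (x u)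
        + (∑ j, a j) / 2 * chi (x v))
      - sgn (∑ j, a j * chi (x (Fin.castAdd 2 j)) - (∑ j, a j) / 2 * chi (x u)
        - (∑ j, a j) / 2 * chi (x v))
      = chi (x u) + chi (x v) - (if x = (fun _ => true) then 2 else 0)
        + (if x = (fun j : Fin (n + 2) => decide ((j : ℕ) < n)) then 2 else 0) := by
  rw [sgn_add_sub_sgn_sub (abs_sum_mul_chi_le (fun j => (ha j).le) _)]
  simp [sum_mul_chi_eq_sum_iff ha, funext_iff_castAdd_two hu hv, hu, hv]

theorem stmt11 (n : ℕ) (a : Fin n → ℝ) (ha : ∀ i, 0 < a i)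
    (A : ℝ) (hA : A = ∑ i, a i)
    (p : ℤ → ℝ)
    (f g : (Fin (n + 2) → Bool) → ℝ)
    (hf : ∀ x : Fin (n + 2) → Bool,
      f x = sgn ((∑ i : Fin n, a i * chi (x (Fin.castAdd 2 i)))
        - A / 2 * chi (x ⟨n, by omega⟩) - A / 2 * chi (x ⟨n + 1, by omega⟩)))
    (hg : ∀ x : Fin (n + 2) → Bool,
      g x = sgn ((∑ i : Fin n, a i * chi (x (Fin.castAdd 2 i)))
        + A / 2 * chi (x ⟨n, by omega⟩) + A / 2 * chi (x ⟨n + 1, by omega⟩))) :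
    ∀ i : Fin (n + 2), (i : ℕ) < n →
      semivalue p g i = semivalue p f i - 2 * (p ((n : ℤ) + 1) - p ((n : ℤ) - 1)) := by
  intro i hi
  subst hA
  have hgf : g = f + ((fun x => chi (x ⟨n, by omega⟩))
      + (fun x => chi (x ⟨n + 1, by omega⟩)) - fun x => if x = (fun _ => true) then 2 else 0)
      + fun x => if x = (fun j : Fin (n + 2) => decide ((j : ℕ) < n)) then 2 else 0 := by
    funext x
    have := sgn_threshold_sub_sgn_threshold ha (u := ⟨n, by omega⟩) (v := ⟨n + 1, by omega⟩)
      rfl rfl x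
    simp only [Pi.add_apply, Pi.sub_apply, hf, hg]
    linarith
  have hwt_top : wt (fun _ : Fin (n + 2) => true) - 1 = n + 1 := by
    rw [show wt (fun _ : Fin (n + 2) => true) = n + 2 by simp [wt]]
    ring
  have hwt_lt : wt (fun j : Fin (n + 2) => decide ((j : ℕ) < n)) = n := by
    simp [wt, Fin.card_filter_val_lt]
  have hdummy : ∀ k, k ≠ i → semivalue p (fun x => chi (x k)) i = 0 := fun k hk =>
    semivalue_eq_zero_of_update_not p _ i fun x => by rw [Function.update_of_ne hk]
  rw [hgf, semivalue_add, semivalue_add, semivalue_sub, semivalue_add, semivalue_ite_eq,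
    semivalue_ite_eq, hdummy _ (Fin.ne_of_val_ne hi.ne'),
    hdummy _ (Fin.ne_of_val_ne (show n + 1 ≠ (i : ℕ) by omega))]
  simp only [semivalueCoeff, hi, decide_true, ↓reduceIte, hwt_top, hwt_lt, chi]
  ring
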